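/- Let D ∈ M_{k×l}(ℝ) be a non-branching matrix with no zero columns. Then there exist matrices R ∈ M_{k×l}(ℝ) and V ∈ M_{l×l}(ℝ) with R = D·V such that: V is upper-triangular with all entries in {−1,0,1} and all diagonal entries in {−1,1}; the non-zero columns of R are linearly independent over ℝ; the supports of those columns of V that have more than one non-zero entry are pairwise disjoint; and for every index i ∈ {1,…,l}, the i-th column of V has more than one non-zero entry if and only if the i-th column of R is the zero vector. -/

import Mathlib

/-!
Join two columns of `D` when some row is non-zero in both. A row with exactly two entries `±1`
forces `u b = ± u a` for every kernel vector `u`, so along a connected component a kernel vector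
is either identically zero or takes values `±c` with one `c ≠ 0`; and since rows never straddle two
components, kernel vectors restrict to components. For the largest column `j` of a component that
carries a non-zero kernel vector, column `j` of `V` is that vector normalised to `1` at `j`; all
other columns of `V` are unit vectors. A dependence among the surviving columns of `R = D V`,
which are columns of `D`, is a kernel vector vanishing at all these largest columns; restricted to
any component it is then zero at the largest column, hence zero throughout.
-/

open scoped Classical

/-- A real matrix is *non-branching* if all its entries lie in `{-1, 0, 1}` and every
row has at most two non-zero entries. -/
def NonBranching {k l : ℕ} (D : Matrix (Fin k) (Fin l) ℝ) : Prop :=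
  (∀ i j, D i j = -1 ∨ D i j = 0 ∨ D i j = 1) ∧
    ∀ i : Fin k, (Finset.univ.filter fun j => D i j ≠ 0).card ≤ 2

/-- The `j`-th column of a matrix, as a vector. -/
def col {k l : ℕ} (M : Matrix (Fin k) (Fin l) ℝ) (j : Fin l) : Fin k → ℝ :=
  fun i => M i j

/-- The number of non-zero entries of the `j`-th column (the cardinality of its support). -/
noncomputable def suppCard {k l : ℕ} (M : Matrix (Fin k) (Fin l) ℝ) (j : Fin l) : ℕ :=
  (Finset.univ.filter fun i => M i j ≠ 0).card

/-- `R = D * V` is a *weak column reduction* of `D`: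
`V` is upper-triangular with entries in `{-1,0,1}` and diagonal entries in `{-1,1}`,
the non-zero columns of `R` are linearly independent, the supports of the columns of `V`
with more than one non-zero entry are pairwise disjoint, and the `i`-th column of `V` has
more than one non-zero entry iff the `i`-th column of `R` is zero. -/
def WeakColumnReduction {k l : ℕ} (D R : Matrix (Fin k) (Fin l) ℝ)
    (V : Matrix (Fin l) (Fin l) ℝ) : Prop :=
  R = D * V ∧
  (∀ i j : Fin l, j < i → V i j = 0) ∧
  (∀ i j : Fin l, V i j = -1 ∨ V i j = 0 ∨ V i j = 1) ∧
  (∀ i : Fin l, V i i = -1 ∨ V i i = 1) ∧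
  (LinearIndependent ℝ fun j : {j : Fin l // col R j ≠ 0} => col R j.1) ∧
  (∀ j₁ j₂ : Fin l, j₁ ≠ j₂ → 1 < suppCard V j₁ → 1 < suppCard V j₂ →
    Disjoint (Finset.univ.filter fun i => V i j₁ ≠ 0)
      (Finset.univ.filter fun i => V i j₂ ≠ 0)) ∧
  (∀ j : Fin l, 1 < suppCard V j ↔ col R j = 0)

open Finset
open scoped Matrix

section ColumnReduction

variable {k l : ℕ}

def colGraph (D : Matrix (Fin k) (Fin l) ℝ) : SimpleGraph (Fin l) where
  Adj a b := a ≠ b ∧ ∃ i, D i a ≠ 0 ∧ D i b ≠ 0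
  symm := ⟨fun _ _ ⟨h, i, ha, hb⟩ => ⟨h.symm, i, hb, ha⟩⟩
  loopless := ⟨fun _ h => h.1 rfl⟩

variable {D : Matrix (Fin k) (Fin l) ℝ}

theorem mulVec_restrict_component_eq_zero {u : Fin l → ℝ} (hu : D *ᵥ u = 0) (j : Fin l) :
    D *ᵥ (fun m => if (colGraph D).Reachable j m then u m else 0) = 0 := by
  funext i
  simp only [Matrix.mulVec, dotProduct, Pi.zero_apply]
  by_cases hrow : ∃ a, (colGraph D).Reachable j a ∧ D i a ≠ 0
  · obtain ⟨a, hja, ha⟩ := hrow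
    have hreach : ∀ m, D i m ≠ 0 → (colGraph D).Reachable j m := by
      intro m hm
      by_cases ham : a = m
      · exact ham ▸ hja
      · exact hja.trans (SimpleGraph.Adj.reachable ⟨ham, i, ha, hm⟩)
    have hrow := congrFun hu i
    simp only [Matrix.mulVec, dotProduct, Pi.zero_apply] at hrow
    rw [← hrow]
    refine Finset.sum_congr rfl fun m _ => ?_
    by_cases hm : D i m = 0
    · simp [hm]
    · simp [hreach m hm]
  · push Not at hrow
    refine Finset.sum_eq_zero fun m _ => ?_
    split_ifs with h
    · rw [hrow m h, zero_mul]
    · rw [mul_zero]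

theorem one_lt_card_support_of_mulVec_eq_zero (hcols : ∀ j, col D j ≠ 0) {w : Fin l → ℝ}
    (hw : D *ᵥ w = 0) {j : Fin l} (hj : w j ≠ 0) :
    1 < (univ.filter fun i => w i ≠ 0).card := by
  by_contra hle
  have hsingle : w = Pi.single j (w j) := by
    funext i
    by_cases hij : i = j
    · subst hij; simp
    · rw [Pi.single_eq_of_ne hij]
      by_contra hi
      exact hij (Finset.card_le_one.mp (not_lt.mp hle) i (by simpa using hi) j (by simpa using hj))
  apply hcols j
  funext i
  have := congrFun hw i
  rw [hsingle, Matrix.mulVec_single] at this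
  simpa [col, hj] using this

theorem linearIndependent_cols_of_mulVec_eq_zero {p : Fin l → Prop}
    (h : ∀ x, D *ᵥ x = 0 → (∀ j, ¬p j → x j = 0) → x = 0) :
    LinearIndependent ℝ fun j : {j // p j} => col D j := by
  rw [Fintype.linearIndependent_iff]
  intro g hg t
  set x : Fin l → ℝ := ∑ s : {j // p j}, g s • Pi.single s.1 1
  have hx : ∀ s : {j // p j}, x s = g s := by
    intro s
    simp only [x, Finset.sum_apply, Pi.smul_apply, Pi.single_apply, smul_eq_mul, mul_ite,
      mul_one, mul_zero, Subtype.val_inj, Finset.sum_ite_eq, Finset.mem_univ, if_true]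
  have hx0 : x = 0 := by
    refine h x ?_ fun j hj => ?_
    · calc D *ᵥ x = ∑ s : {j // p j}, g s • col D s := by
            simp only [x, Matrix.mulVec_sum, Matrix.mulVec_smul, Matrix.mulVec_single_one]; rfl
        _ = 0 := hg
    · simp only [x, Finset.sum_apply, Pi.smul_apply, smul_eq_mul]
      exact Finset.sum_eq_zero fun s _ => by
        rw [Pi.single_eq_of_ne (fun h => hj (by rw [h]; exact s.2)), mul_zero]
  rw [← hx t, hx0, Pi.zero_apply]

namespace NonBranching

theorem eq_neg_one_or_eq_one (hD : NonBranching D) {i : Fin k} {j : Fin l} (h : D i j ≠ 0) :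
    D i j = -1 ∨ D i j = 1 := by
  rcases hD.1 i j with h' | h' | h'
  exacts [Or.inl h', absurd h' h, Or.inr h']

theorem mulVec_apply_eq_add (hD : NonBranching D) {i : Fin k} {a b : Fin l} (hab : a ≠ b)
    (ha : D i a ≠ 0) (hb : D i b ≠ 0) (u : Fin l → ℝ) :
    (D *ᵥ u) i = D i a * u a + D i b * u b := by
  have hrow : univ.filter (fun j => D i j ≠ 0) = {a, b} := by
    refine (eq_of_subset_of_card_le (fun x hx => ?_) ?_).symm
    · rcases mem_insert.mp hx with rfl | hx
      · simpa using ha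
      · simpa [mem_singleton.mp hx] using hb
    · rw [card_pair hab]; exact hD.2 i
  rw [Matrix.mulVec, dotProduct, ← sum_filter_of_ne fun j _ h => left_ne_zero_of_mul h, hrow,
    sum_pair hab]

theorem exists_sign_of_adj (hD : NonBranching D) {a b : Fin l} (h : (colGraph D).Adj a b) :
    ∃ s : ℝ, (s = -1 ∨ s = 1) ∧ ∀ u, D *ᵥ u = 0 → u b = s * u a := by
  obtain ⟨hab, i, ha, hb⟩ := h
  refine ⟨-(D i a * D i b), ?_, fun u hu => ?_⟩
  · rcases hD.eq_neg_one_or_eq_one ha with h1 | h1 <;>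
      rcases hD.eq_neg_one_or_eq_one hb with h2 | h2 <;> simp [h1, h2]
  · have hrow := hD.mulVec_apply_eq_add hab ha hb u
    rw [hu, Pi.zero_apply] at hrow
    rcases hD.eq_neg_one_or_eq_one ha with h1 | h1 <;>
      rcases hD.eq_neg_one_or_eq_one hb with h2 | h2 <;> rw [h1, h2] at hrow ⊢ <;> linarith

theorem exists_sign_of_reachable (hD : NonBranching D) {a b : Fin l}
    (h : (colGraph D).Reachable a b) :
    ∃ s : ℝ, (s = -1 ∨ s = 1) ∧ ∀ u, D *ᵥ u = 0 → u b = s * u a := by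
  rw [SimpleGraph.reachable_iff_reflTransGen] at h
  induction h with
  | refl => exact ⟨1, Or.inr rfl, fun u _ => (one_mul _).symm⟩
  | tail _ hadj ih =>
    obtain ⟨s, hs, hsu⟩ := ih
    obtain ⟨t, ht, htu⟩ := hD.exists_sign_of_adj hadj
    refine ⟨t * s, ?_, fun u hu => by rw [htu u hu, hsu u hu, mul_assoc]⟩
    rcases hs with rfl | rfl <;> rcases ht with rfl | rfl <;> norm_num

theorem apply_ne_zero_of_reachable (hD : NonBranching D) {u : Fin l → ℝ} (hu : D *ᵥ u = 0)
    {a b : Fin l} (h : (colGraph D).Reachable a b) (ha : u a ≠ 0) : u b ≠ 0 := by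
  obtain ⟨s, -, hs⟩ := hD.exists_sign_of_reachable h.symm
  intro hb
  exact ha (by rw [hs u hu, hb, mul_zero])

end NonBranching

/-- The columns that `R = D * reductionMatrix D` kills: the largest column of each component of
`colGraph D` on which `D` has a non-zero kernel vector. -/
def IsKernelTop (D : Matrix (Fin k) (Fin l) ℝ) (j : Fin l) : Prop :=
  (∀ m, (colGraph D).Reachable j m → m ≤ j) ∧
    ∃ u : Fin l → ℝ, D *ᵥ u = 0 ∧ u j ≠ 0 ∧ ∀ m, ¬(colGraph D).Reachable j m → u m = 0

noncomputable def reductionCol (D : Matrix (Fin k) (Fin l) ℝ) (j : Fin l) : Fin l → ℝ :=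
  if h : IsKernelTop D j then (h.2.choose j)⁻¹ • h.2.choose else Pi.single j 1

noncomputable def reductionMatrix (D : Matrix (Fin k) (Fin l) ℝ) : Matrix (Fin l) (Fin l) ℝ :=
  Matrix.of fun i j => reductionCol D j i

theorem IsKernelTop.eq_of_reachable {a b : Fin l} (ha : IsKernelTop D a) (hb : IsKernelTop D b)
    (h : (colGraph D).Reachable a b) : a = b :=
  le_antisymm (hb.1 a h.symm) (ha.1 b h)

theorem reductionCol_of_not_isKernelTop {j : Fin l} (h : ¬IsKernelTop D j) :
    reductionCol D j = Pi.single j 1 :=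
  dif_neg h

theorem IsKernelTop.mulVec_reductionCol {j : Fin l} (h : IsKernelTop D j) :
    D *ᵥ reductionCol D j = 0 := by
  rw [reductionCol, dif_pos h, Matrix.mulVec_smul, h.2.choose_spec.1, smul_zero]

theorem reductionCol_self (j : Fin l) : reductionCol D j j = 1 := by
  by_cases h : IsKernelTop D j
  · rw [reductionCol, dif_pos h, Pi.smul_apply, smul_eq_mul, inv_mul_cancel₀ h.2.choose_spec.2.1]
  · rw [reductionCol_of_not_isKernelTop h, Pi.single_eq_same]

theorem reductionCol_apply_of_not_reachable {i j : Fin l} (hji : ¬(colGraph D).Reachable j i) :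
    reductionCol D j i = 0 := by
  by_cases h : IsKernelTop D j
  · rw [reductionCol, dif_pos h, Pi.smul_apply, h.2.choose_spec.2.2 i hji, smul_zero]
  · rw [reductionCol_of_not_isKernelTop h,
      Pi.single_eq_of_ne fun hij => hji (by rw [hij])]

theorem reachable_of_reductionCol_apply_ne_zero {i j : Fin l} (h : reductionCol D j i ≠ 0) :
    (colGraph D).Reachable j i :=
  not_not.mp (mt reductionCol_apply_of_not_reachable h)

theorem reductionMatrix_apply_eq_zero_of_lt {i j : Fin l} (hji : j < i) :
    reductionMatrix D i j = 0 := by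
  by_cases h : IsKernelTop D j
  · exact reductionCol_apply_of_not_reachable fun hr => (h.1 i hr).not_gt hji
  · exact (congrFun (reductionCol_of_not_isKernelTop h) i).trans (Pi.single_eq_of_ne hji.ne' 1)

theorem NonBranching.reductionCol_apply_mem (hD : NonBranching D) (i j : Fin l) :
    reductionCol D j i = -1 ∨ reductionCol D j i = 0 ∨ reductionCol D j i = 1 := by
  by_cases h : IsKernelTop D j
  · by_cases hji : (colGraph D).Reachable j i
    · obtain ⟨s, hs, hsu⟩ := hD.exists_sign_of_reachable hji
      obtain ⟨hu, huj, -⟩ := h.2.choose_spec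
      rw [reductionCol, dif_pos h, Pi.smul_apply, hsu _ hu, smul_eq_mul, mul_left_comm,
        inv_mul_cancel₀ huj, mul_one]
      tauto
    · exact Or.inr (Or.inl (reductionCol_apply_of_not_reachable hji))
  · rw [reductionCol_of_not_isKernelTop h, Pi.single_apply]
    split_ifs <;> simp

theorem NonBranching.eq_zero_of_forall_isKernelTop (hD : NonBranching D) {x : Fin l → ℝ}
    (hx : D *ᵥ x = 0) (h : ∀ j, IsKernelTop D j → x j = 0) : x = 0 := by
  funext j
  by_contra hxj
  set y : Fin l → ℝ := fun m => if (colGraph D).Reachable j m then x m else 0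
  have hy : D *ᵥ y = 0 := mulVec_restrict_component_eq_zero hx j
  obtain ⟨t, hjt, htmax⟩ := (univ.filter ((colGraph D).Reachable j)).exists_max_image id
    ⟨j, mem_filter.mpr ⟨mem_univ j, .refl j⟩⟩
  rw [mem_filter] at hjt
  have hyt : y t ≠ 0 :=
    hD.apply_ne_zero_of_reachable hy hjt.2 (by simpa [y, SimpleGraph.Reachable.refl] using hxj)
  have htop : IsKernelTop D t := by
    refine ⟨fun m htm => htmax m (mem_filter.mpr ⟨mem_univ m, hjt.2.trans htm⟩), y, hy, hyt,
      fun m htm => ?_⟩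
    simp only [y, ite_eq_right_iff]
    exact fun hjm => absurd (hjt.2.symm.trans hjm) htm
  exact hyt (by simpa [y, hjt.2] using h t htop)

theorem col_mul_reductionMatrix_eq_zero_iff (hcols : ∀ j, col D j ≠ 0) (j : Fin l) :
    col (D * reductionMatrix D) j = 0 ↔ IsKernelTop D j := by
  change D *ᵥ reductionCol D j = 0 ↔ _
  refine ⟨fun h => by_contra fun hj => hcols j ?_, IsKernelTop.mulVec_reductionCol⟩
  rwa [reductionCol_of_not_isKernelTop hj, Matrix.mulVec_single_one] at h

theorem one_lt_suppCard_reductionMatrix_iff (hcols : ∀ j, col D j ≠ 0) (j : Fin l) :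
    1 < suppCard (reductionMatrix D) j ↔ IsKernelTop D j := by
  refine ⟨fun h => by_contra fun hj => ?_, fun h => ?_⟩
  · have hsupp : (univ.filter fun i => reductionMatrix D i j ≠ 0) = {j} := by
      ext i
      simp [reductionMatrix, reductionCol_of_not_isKernelTop hj, Pi.single_apply]
    rw [suppCard, hsupp, card_singleton] at h
    exact h.false
  · exact one_lt_card_support_of_mulVec_eq_zero hcols h.mulVec_reductionCol
      ((reductionCol_self j).symm ▸ one_ne_zero)

theorem IsKernelTop.disjoint_support {a b : Fin l} (ha : IsKernelTop D a) (hb : IsKernelTop D b)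
    (hab : a ≠ b) :
    Disjoint (univ.filter fun i => reductionMatrix D i a ≠ 0)
      (univ.filter fun i => reductionMatrix D i b ≠ 0) := by
  refine disjoint_left.mpr fun i hia hib => hab (ha.eq_of_reachable hb ?_)
  exact (reachable_of_reductionCol_apply_ne_zero (mem_filter.mp hia).2).trans
    (reachable_of_reductionCol_apply_ne_zero (mem_filter.mp hib).2).symm

theorem NonBranching.linearIndependent_nonzero_cols_mul_reductionMatrix (hD : NonBranching D)
    (hcols : ∀ j, col D j ≠ 0) :
    LinearIndependent ℝ fun j : {j // col (D * reductionMatrix D) j ≠ 0} =>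
      col (D * reductionMatrix D) j := by
  have hcol : ∀ j : {j // col (D * reductionMatrix D) j ≠ 0},
      col (D * reductionMatrix D) j = col D j := fun j => by
    change D *ᵥ reductionCol D j = _
    rw [reductionCol_of_not_isKernelTop
      (mt (col_mul_reductionMatrix_eq_zero_iff hcols j).mpr j.2), Matrix.mulVec_single_one]
    rfl
  simp only [hcol]
  refine linearIndependent_cols_of_mulVec_eq_zero fun x hx hxtop =>
    hD.eq_zero_of_forall_isKernelTop hx fun j hj => hxtop j ?_
  exact not_not.mpr ((col_mul_reductionMatrix_eq_zero_iff hcols j).mpr hj)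

end ColumnReduction

theorem stmt0 {k l : ℕ} (D : Matrix (Fin k) (Fin l) ℝ)
    (hD : NonBranching D) (hcols : ∀ j, col D j ≠ 0) :
    ∃ (R : Matrix (Fin k) (Fin l) ℝ) (V : Matrix (Fin l) (Fin l) ℝ),
      WeakColumnReduction D R V := by
  refine ⟨D * reductionMatrix D, reductionMatrix D, rfl,
    fun _ _ => reductionMatrix_apply_eq_zero_of_lt,
    fun i j => hD.reductionCol_apply_mem i j, fun j => Or.inr (reductionCol_self j),
    hD.linearIndependent_nonzero_cols_mul_reductionMatrix hcols,
    fun a b hab ha hb => ?_, fun j => ?_⟩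
  · rw [one_lt_suppCard_reductionMatrix_iff hcols] at ha hb
    exact ha.disjoint_support hb hab
  · rw [one_lt_suppCard_reductionMatrix_iff hcols, col_mul_reductionMatrix_eq_zero_iff hcols]
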